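/- Let 1 ≤ p ≤ n, X ∈ St(n,p), and C ⊆ [p] be nonempty, and write X_{-C} = X_{[p]∖C}. Let Ξ ∈ ℝ^{n×|C|} satisfy dist(Ξ, M_{X_{[p]∖C}}) < 1, where dist is the infimum of the Frobenius distance. Then Ξᵀ(I − X_{-C}X_{-C}ᵀ)Ξ is positive definite, and the set of points of M_{X_{[p]∖C}} nearest to Ξ is the singleton {(I − X_{-C}X_{-C}ᵀ)Ξ·[Ξᵀ(I − X_{-C}X_{-C}ᵀ)Ξ]^{−1/2}}; this point is also the unique nearest point of St(n,|C|) to (I − X_{-C}X_{-C}ᵀ)Ξ. Consequently M_{X_{[p]∖C}} is 1-proximally smooth: its nearest-point projection is single-valued on {Ξ ∈ ℝ^{n×|C|} : dist(Ξ, M_{X_{[p]∖C}}) < 1}. Moreover, if in addition X_{-C}ᵀΞ = 0, then this unique nearest point equals Ξ(ΞᵀΞ)^{−1/2}, the unique nearest point of St(n,|C|) to Ξ. -/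

import Mathlib

/-!
Common definitions for the formalization of results from
"Nonsmooth Optimization over the Stiefel Manifold via a Randomized
Submanifold Subgradient Method" (RSSM).
-/

open Matrix Finset

noncomputable section

namespace RSSM

variable {n p ℓ : ℕ}

/-- Real `n × p` matrices. -/
abbrev Mat (n p : ℕ) := Matrix (Fin n) (Fin p) ℝ

/-- Frobenius inner product `⟨ξ,η⟩ = tr(ξᵀ η)`. -/
def fip (ξ η : Mat n p) : ℝ := (ξᵀ * η).trace

/-- Frobenius norm. -/
def fnorm (ξ : Mat n p) : ℝ := Real.sqrt (fip ξ ξ)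

/-- The Stiefel manifold `St(n,p)`. -/
def Stiefel (n p : ℕ) : Set (Mat n p) := {X | Xᵀ * X = 1}

/-- Column-selection matrix `I_C`. -/
def sel (C : Finset (Fin p)) : Matrix (Fin p) (Fin C.card) ℝ :=
  Matrix.of fun s t => if s = C.orderEmbOfFin rfl t then (1 : ℝ) else 0

/-- Skew-symmetric part. -/
def skewPart {m : ℕ} (A : Matrix (Fin m) (Fin m) ℝ) : Matrix (Fin m) (Fin m) ℝ :=
  (1 / 2 : ℝ) • (A - Aᵀ)

/-- Symmetric part. -/
def symPart {m : ℕ} (A : Matrix (Fin m) (Fin m) ℝ) : Matrix (Fin m) (Fin m) ℝ :=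
  (1 / 2 : ℝ) • (A + Aᵀ)

open Classical in
/-- Inverse of the positive-semidefinite square root (junk value `0` otherwise). -/
def invSqrt {m : ℕ} (S : Matrix (Fin m) (Fin m) ℝ) : Matrix (Fin m) (Fin m) ℝ :=
  if h : S.PosSemidef then
    ((h.1.eigenvectorUnitary : Matrix (Fin m) (Fin m) ℝ)
      * Matrix.diagonal (fun i => Real.sqrt (h.1.eigenvalues i))
      * (star h.1.eigenvectorUnitary : Matrix (Fin m) (Fin m) ℝ))⁻¹ else 0

/-- Orthogonal projection onto the tangent space `T_X St(n,p)`. -/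
def ptan (X ξ : Mat n p) : Mat n p := ξ - X * symPart (Xᵀ * ξ)

/-- Orthogonal projection `Π` onto the tangent space of the submanifold block at `X_D`. -/
def pblk (X : Mat n p) (D : Finset (Fin p)) (η : Matrix (Fin n) (Fin D.card) ℝ) :
    Matrix (Fin n) (Fin D.card) ℝ :=
  (X * sel D) * skewPart ((X * sel D)ᵀ * η) + (1 - X * Xᵀ) * η

/-- The averaging operator `A_X` (written as an average over ordered pairs of
distinct indices, which equals the average over unordered pairs since each
unordered pair is counted twice). -/
def avg (C : Fin ℓ → Finset (Fin p)) (X ξ : Mat n p) : Mat n p :=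
  ((ℓ : ℝ) * ((ℓ : ℝ) - 1))⁻¹ •
    ∑ q ∈ Finset.univ.offDiag,
      ((1 : Matrix (Fin n) (Fin n) ℝ)
          - (X * sel ((C q.1 ∪ C q.2)ᶜ)) * (X * sel ((C q.1 ∪ C q.2)ᶜ))ᵀ)
        * (ξ * sel (C q.1 ∪ C q.2)) * (sel (C q.1 ∪ C q.2))ᵀ

/-- The averaging operator `A_X` as a linear endomorphism. -/
def avgL (C : Fin ℓ → Finset (Fin p)) (X : Mat n p) : Mat n p →ₗ[ℝ] Mat n p where
  toFun := avg C X
  map_add' := by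
    intro ξ η
    simp [avg, Matrix.add_mul, Matrix.mul_add, Finset.sum_add_distrib, smul_add]
  map_smul' := by
    intro c ξ
    simp only [avg, RingHom.id_apply, Matrix.smul_mul, Matrix.mul_smul, ← Finset.smul_sum]
    rw [smul_comm]

/-- `C(ℓ,2) = ℓ(ℓ-1)/2`. -/
def choose2 (ℓ : ℕ) : ℝ := (ℓ : ℝ) * ((ℓ : ℝ) - 1) / 2

/-- Block Hadamard product `A ⊡ M` with respect to the partition `C`. -/
def bhad (C : Fin ℓ → Finset (Fin p)) (A : Matrix (Fin ℓ) (Fin ℓ) ℝ)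
    (M : Matrix (Fin p) (Fin p) ℝ) : Matrix (Fin p) (Fin p) ℝ :=
  Matrix.of fun s t => (∑ i, ∑ j, if s ∈ C i ∧ t ∈ C j then A i j else 0) * M s t

/-- `Q' = J - ((ℓ-2)/(ℓ-1)) I`. -/
def Qmat (ℓ : ℕ) : Matrix (Fin ℓ) (Fin ℓ) ℝ :=
  Matrix.of fun i j => 1 - (if i = j then ((ℓ : ℝ) - 2) / ((ℓ : ℝ) - 1) else 0)

/-- The all-ones `ℓ × ℓ` matrix `J`. -/
def Jmat (ℓ : ℕ) : Matrix (Fin ℓ) (Fin ℓ) ℝ := Matrix.of fun _ _ => 1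

/-- The operator `B_Z` (the inverse of the averaging operator `A_Z`). -/
def Bop (C : Fin ℓ → Finset (Fin p)) (Z ξ : Mat n p) : Mat n p :=
  Z * (choose2 ℓ • bhad C (Qmat ℓ) (Zᵀ * ξ)) + ((ℓ : ℝ) / 2) • ((1 - Z * Zᵀ) * ξ)

/-- `‖ξ‖²_{A_Z^{-1}} = ⟨B_Z(ξ), ξ⟩`. -/
def anorm2 (C : Fin ℓ → Finset (Fin p)) (Z ξ : Mat n p) : ℝ := fip (Bop C Z ξ) ξ

/-- The RSSM update `U(X, v, γ, {i,j})`: it agrees with `X` on all columns outside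
`C_i ∪ C_j` and performs a retracted partial Riemannian subgradient step there. -/
def update (C : Fin ℓ → Finset (Fin p)) (X v : Mat n p) (γ : ℝ) (i j : Fin ℓ) : Mat n p :=
  X - (X * sel (C i ∪ C j)) * (sel (C i ∪ C j))ᵀ
    + ((X * sel (C i ∪ C j) - γ • pblk X (C i ∪ C j) (v * sel (C i ∪ C j)))
        * invSqrt ((X * sel (C i ∪ C j) - γ • pblk X (C i ∪ C j) (v * sel (C i ∪ C j)))ᵀ
            * (X * sel (C i ∪ C j) - γ • pblk X (C i ∪ C j) (v * sel (C i ∪ C j)))))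
      * (sel (C i ∪ C j))ᵀ

/-- The subdifferential of a `τ`-weakly convex function relative to `Ω`. -/
def subdiff (Ω : Set (Mat n p)) (τ : ℝ) (f : Mat n p → ℝ) (X : Mat n p) :
    Set (Mat n p) :=
  {v | ∀ Y ∈ Ω, f Y ≥ f X + fip v (Y - X) - τ / 2 * (fnorm (Y - X)) ^ 2}

/-- `C` is a partition of `[p]` into nonempty blocks. -/
def IsPartition (C : Fin ℓ → Finset (Fin p)) : Prop :=
  (∀ i, (C i).Nonempty) ∧ (∀ i j, i ≠ j → Disjoint (C i) (C j)) ∧ (∀ s, ∃ i, s ∈ C i)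

/-- The weakly convex Lipschitz setting. -/
structure Setting (n p : ℕ) (f : Mat n p → ℝ) (τ L : ℝ) (Ω : Set (Mat n p)) : Prop where
  tau_nonneg : 0 ≤ τ
  L_pos : 0 < L
  isOpen : IsOpen Ω
  bounded : ∃ R : ℝ, ∀ Y ∈ Ω, fnorm Y ≤ R
  convex : Convex ℝ Ω
  stiefel_subset : Stiefel n p ⊆ Ω
  lipschitz : ∀ X ∈ Ω, ∀ Y ∈ Ω, |f X - f Y| ≤ L * fnorm (X - Y)
  weaklyConvex : ConvexOn ℝ Ω (fun Z => f Z + τ / 2 * (fnorm Z) ^ 2)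

/-- The adaptive proximal objective `Y ↦ f(Y) + (1/(2λ))‖Y-X‖²_{A_X^{-1}}`. -/
def pobj (C : Fin ℓ → Finset (Fin p)) (f : Mat n p → ℝ) (lam : ℝ) (X Y : Mat n p) : ℝ :=
  f Y + 1 / (2 * lam) * anorm2 C X (Y - X)

/-- The adaptive Moreau envelope `f_λ`. -/
def moreau (C : Fin ℓ → Finset (Fin p)) (f : Mat n p → ℝ) (lam : ℝ) (X : Mat n p) : ℝ :=
  sInf ((fun Y => pobj C f lam X Y) '' Stiefel n p)

open Classical in
/-- The adaptive proximal point `Z_X` (defined via choice; under the standing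
hypotheses the minimizer over the Stiefel manifold exists and is unique). -/
def proxPt (C : Fin ℓ → Finset (Fin p)) (f : Mat n p → ℝ) (lam : ℝ) (X : Mat n p) :
    Mat n p :=
  if h : ∃ Z ∈ Stiefel n p, ∀ Y ∈ Stiefel n p, pobj C f lam X Z ≤ pobj C f lam X Y
  then h.choose else X

/-- The surrogate stationarity measure `Θ_λ(X) = (1/λ)‖Z_X - X‖_{A_X^{-1}}`. -/
def Theta (C : Fin ℓ → Finset (Fin p)) (f : Mat n p → ℝ) (lam : ℝ) (X : Mat n p) : ℝ :=
  1 / lam * Real.sqrt (anorm2 C X (proxPt C f lam X - X))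

/-- The type of unordered pairs of distinct indices in `[ℓ]`. -/
def PairT (ℓ : ℕ) := {s : Sym2 (Fin ℓ) // ¬ s.IsDiag}

instance : Fintype (PairT ℓ) := by unfold PairT; infer_instance
instance : DecidableEq (PairT ℓ) := by unfold PairT; infer_instance
instance : MeasurableSpace (PairT ℓ) := ⊤

/-- The RSSM update as a function of an unordered pair of indices. -/
def updateS (C : Fin ℓ → Finset (Fin p)) (X v : Mat n p) (γ : ℝ) (s : Sym2 (Fin ℓ)) :
    Mat n p :=
  Sym2.lift ⟨fun i j => update C X v γ i j, by
    intro i j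
    show update C X v γ i j = update C X v γ j i
    unfold update pblk
    rw [Finset.union_comm (C i) (C j)]⟩ s

/-- The RSSM iterates driven by a sequence `ω` of unordered pairs. -/
def seqIter (C : Fin ℓ → Finset (Fin p)) (V : Mat n p → Mat n p) (X0 : Mat n p)
    (γ : ℕ → ℝ) (ω : ℕ → PairT ℓ) : ℕ → Mat n p
  | 0 => X0
  | k + 1 => updateS C (seqIter C V X0 γ ω k) (V (seqIter C V X0 γ ω k)) (γ k) (ω k).1

/-- The RSSM iterate after `k` steps driven by a finite prefix of unordered pairs. -/
def preIter (C : Fin ℓ → Finset (Fin p)) (V : Mat n p → Mat n p) (X0 : Mat n p)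
    (γ : ℕ → ℝ) : (k : ℕ) → (Fin k → PairT ℓ) → Mat n p
  | 0, _ => X0
  | k + 1, g =>
      updateS C (preIter C V X0 γ k (fun m => g m.castSucc))
        (V (preIter C V X0 γ k (fun m => g m.castSucc))) (γ k) (g (Fin.last k)).1

/-- `E[h(X^k)]`, the average over all prefixes of unordered pairs of length `k`. -/
def Eavg (C : Fin ℓ → Finset (Fin p)) (V : Mat n p → Mat n p) (X0 : Mat n p)
    (γ : ℕ → ℝ) (k : ℕ) (h : Mat n p → ℝ) : ℝ :=
  (1 / (Fintype.card (PairT ℓ) : ℝ)) ^ k * ∑ g : Fin k → PairT ℓ, h (preIter C V X0 γ k g)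

/-! Auxiliary lemmas for Statement 0. -/

/-- The positive-semidefinite square root (as in `invSqrt`). -/
def psqrt {m : ℕ} {S : Matrix (Fin m) (Fin m) ℝ} (h : S.PosSemidef) :
    Matrix (Fin m) (Fin m) ℝ :=
  (h.1.eigenvectorUnitary : Matrix (Fin m) (Fin m) ℝ)
      * Matrix.diagonal (fun i => Real.sqrt (h.1.eigenvalues i))
      * (star h.1.eigenvectorUnitary : Matrix (Fin m) (Fin m) ℝ)

lemma psqrt_posSemidef {m : ℕ} {S : Matrix (Fin m) (Fin m) ℝ} (h : S.PosSemidef) :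
    (psqrt h).PosSemidef := by
  unfold psqrt
  rw [star_eq_conjTranspose]
  exact (Matrix.PosSemidef.diagonal (fun i => Real.sqrt_nonneg _)).mul_mul_conjTranspose_same _

lemma psqrt_mul_self {m : ℕ} {S : Matrix (Fin m) (Fin m) ℝ} (h : S.PosSemidef) :
    psqrt h * psqrt h = S := by
  unfold psqrt
  set V := h.1.eigenvectorUnitary
  have hV : (star V : Matrix (Fin m) (Fin m) ℝ) * (V : Matrix (Fin m) (Fin m) ℝ) = 1 :=
    Unitary.coe_star_mul_self V
  have hd : Matrix.diagonal (fun i => Real.sqrt (h.1.eigenvalues i))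
      * Matrix.diagonal (fun i => Real.sqrt (h.1.eigenvalues i))
      = Matrix.diagonal (RCLike.ofReal ∘ h.1.eigenvalues) := by
    rw [Matrix.diagonal_mul_diagonal]
    congr 1; funext i
    simp [Real.mul_self_sqrt (h.eigenvalues_nonneg i)]
  conv_rhs => rw [h.1.spectral_theorem, Unitary.conjStarAlgAut_apply]
  rw [← hd]
  simp only [Matrix.mul_assoc]
  rw [← Matrix.mul_assoc (star V : Matrix (Fin m) (Fin m) ℝ) (V : Matrix (Fin m) (Fin m) ℝ), hV,
    Matrix.one_mul]


lemma trace_transpose_mul {a b : ℕ} (A B : Matrix (Fin a) (Fin b) ℝ) :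
    (Aᵀ * B).trace = (Bᵀ * A).trace := by
  rw [← Matrix.trace_transpose (Aᵀ*B), Matrix.transpose_mul, Matrix.transpose_transpose]

lemma fip_eq_sum (A : Mat n p) : fip A A = ∑ j, ∑ i, (A i j)^2 := by
  simp [fip, Matrix.trace, Matrix.diag, Matrix.mul_apply, sq, Matrix.transpose_apply]

lemma fip_self_nonneg (A : Mat n p) : 0 ≤ fip A A := by
  rw [fip_eq_sum]
  exact Finset.sum_nonneg fun j _ => Finset.sum_nonneg fun i _ => sq_nonneg _

lemma eq_zero_of_fip_self (A : Mat n p) (h : fip A A = 0) : A = 0 := by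
  rw [fip_eq_sum] at h
  ext i j
  have h1 : ∀ j ∈ Finset.univ, (0:ℝ) ≤ ∑ i, (A i j)^2 :=
    fun j _ => Finset.sum_nonneg fun i _ => sq_nonneg _
  have h2 := (Finset.sum_eq_zero_iff_of_nonneg h1).1 h j (Finset.mem_univ j)
  have h3 := (Finset.sum_eq_zero_iff_of_nonneg (fun i _ => sq_nonneg (A i j))).1 h2 i
    (Finset.mem_univ i)
  simpa using pow_eq_zero_iff (n := 2) (by norm_num) |>.1 h3

lemma fnorm_sq (A : Mat n p) : fnorm A ^ 2 = fip A A := by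
  rw [fnorm, Real.sq_sqrt (fip_self_nonneg A)]

lemma fnorm_le_fnorm_iff (A B : Mat n p) : fnorm A ≤ fnorm B ↔ fip A A ≤ fip B B := by
  rw [fnorm, fnorm]
  exact Real.sqrt_le_sqrt_iff (fip_self_nonneg B)


lemma fip_sub_expand {k : ℕ} (A Y : Mat n k) :
    fip (A - Y) (A - Y) = fip A A - 2 * (Aᵀ * Y).trace + (Yᵀ * Y).trace := by
  simp only [fip, Matrix.transpose_sub, Matrix.sub_mul, Matrix.mul_sub, Matrix.trace_sub]
  rw [trace_transpose_mul Y A]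
  ring

lemma fnorm_sub_le_iff {k : ℕ} {A Y Z : Mat n k} (hY : Yᵀ * Y = 1) (hZ : Zᵀ * Z = 1) :
    fnorm (A - Y) ≤ fnorm (A - Z) ↔ (Aᵀ * Z).trace ≤ (Aᵀ * Y).trace := by
  rw [fnorm_le_fnorm_iff, fip_sub_expand, fip_sub_expand, hY, hZ]
  constructor <;> intro h <;> linarith

/-- trace of product of PSD matrices is nonneg. -/
lemma trace_psd_mul_nonneg {k : ℕ} {H D : Matrix (Fin k) (Fin k) ℝ}
    (hH : H.PosSemidef) (hD : D.PosSemidef) : 0 ≤ (H * D).trace := by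
  have hL := (psqrt_posSemidef hH)
  have hK := (psqrt_posSemidef hD)
  set L := (psqrt hH)
  set K := (psqrt hD)
  have hLs : Lᵀ = L := by rw [← Matrix.conjTranspose_eq_transpose_of_trivial, hL.isHermitian]
  have hKs : Kᵀ = K := by rw [← Matrix.conjTranspose_eq_transpose_of_trivial, hK.isHermitian]
  have : (H * D).trace = fip (L * K) (L * K) := by
    rw [fip, Matrix.transpose_mul, hLs, hKs, ← (psqrt_mul_self hH), ← (psqrt_mul_self hD)]
    rw [show L * L * (K * K) = (L * (L * K)) * K by noncomm_ring,
      Matrix.trace_mul_comm, Matrix.mul_assoc]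
  rw [this]; exact fip_self_nonneg _

lemma psd_eq_zero_of_trace {k : ℕ} {H D : Matrix (Fin k) (Fin k) ℝ}
    (hH : H.PosSemidef) (hdet : IsUnit H.det) (hD : D.PosSemidef)
    (h0 : (H * D).trace = 0) : D = 0 := by
  have hL := (psqrt_posSemidef hH)
  have hK := (psqrt_posSemidef hD)
  set L := (psqrt hH)
  set K := (psqrt hD)
  have hLs : Lᵀ = L := by rw [← Matrix.conjTranspose_eq_transpose_of_trivial, hL.isHermitian]
  have hKs : Kᵀ = K := by rw [← Matrix.conjTranspose_eq_transpose_of_trivial, hK.isHermitian]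
  have heq : (H * D).trace = fip (L * K) (L * K) := by
    rw [fip, Matrix.transpose_mul, hLs, hKs, ← (psqrt_mul_self hH), ← (psqrt_mul_self hD)]
    rw [show L * L * (K * K) = (L * (L * K)) * K by noncomm_ring,
      Matrix.trace_mul_comm, Matrix.mul_assoc]
  have hLK : L * K = 0 := eq_zero_of_fip_self _ (by rw [← heq, h0])
  have hHK : H * K = 0 := by
    rw [← (psqrt_mul_self hH), Matrix.mul_assoc, hLK, Matrix.mul_zero]
  have hK0 : K = 0 := by
    have := congrArg (H⁻¹ * ·) hHK
    simpa [← Matrix.mul_assoc, Matrix.nonsing_inv_mul H hdet] using this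
  rw [← (psqrt_mul_self hD), show (psqrt hD) = K from rfl, hK0, Matrix.mul_zero]

lemma dot_mulVec_transpose {a b : ℕ} (A : Matrix (Fin a) (Fin b) ℝ) (v : Fin b → ℝ)
    (w : Fin a → ℝ) : (A *ᵥ v) ⬝ᵥ w = v ⬝ᵥ (Aᵀ *ᵥ w) := by
  rw [Matrix.dotProduct_mulVec, Matrix.vecMul_transpose, dotProduct_comm]

lemma dot_self_nonneg {a : ℕ} (v : Fin a → ℝ) : 0 ≤ v ⬝ᵥ v :=
  Finset.sum_nonneg fun i _ => mul_self_nonneg _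

/-- The key polar decomposition/trace-maximization lemma. -/
lemma polar_key {k : ℕ} (A : Mat n k) (hA : (Aᵀ * A).PosDef) (H : Matrix (Fin k) (Fin k) ℝ)
    (hHdef : H = (psqrt hA.posSemidef)) :
    (A * H⁻¹)ᵀ * (A * H⁻¹) = 1 ∧
    (Aᵀ * (A * H⁻¹)).trace = H.trace ∧
    ∀ Y : Mat n k, Yᵀ * Y = 1 →
      (Aᵀ * Y).trace ≤ H.trace ∧ ((Aᵀ * Y).trace = H.trace → Y = A * H⁻¹) := by
  have hPSD := hA.posSemidef
  have hHpsd : H.PosSemidef := hHdef ▸ (psqrt_posSemidef hPSD)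
  have hHs : Hᵀ = H := by
    rw [← Matrix.conjTranspose_eq_transpose_of_trivial, hHpsd.isHermitian]
  have hHH : H * H = Aᵀ * A := by rw [hHdef]; exact (psqrt_mul_self hPSD)
  have hdet : IsUnit H.det := by
    have h1 : H.det * H.det = (Aᵀ * A).det := by rw [← Matrix.det_mul, hHH]
    have h2 : (0:ℝ) < (Aᵀ * A).det := hA.det_pos
    have : H.det ≠ 0 := fun h => by simp [h] at h1; exact absurd h1.symm (ne_of_gt h2)
    exact this.isUnit
  have hinv1 : H * H⁻¹ = 1 := Matrix.mul_nonsing_inv H hdet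
  have hinv2 : H⁻¹ * H = 1 := Matrix.nonsing_inv_mul H hdet
  have hinvT : (H⁻¹)ᵀ = H⁻¹ := by rw [Matrix.transpose_nonsing_inv, hHs]
  set U := A * H⁻¹ with hUdef
  have hU : Uᵀ * U = 1 := by
    rw [hUdef, Matrix.transpose_mul, hinvT, Matrix.mul_assoc, ← Matrix.mul_assoc Aᵀ A,
      ← hHH, show H * H * H⁻¹ = H * (H * H⁻¹) by rw [Matrix.mul_assoc], hinv1,
      Matrix.mul_one, hinv2]
  have hAU : Aᵀ * U = H := by
    rw [hUdef, ← Matrix.mul_assoc, ← hHH, Matrix.mul_assoc, hinv1, Matrix.mul_one]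
  refine ⟨hU, by rw [hAU], fun Y hY => ?_⟩
  set W := Uᵀ * Y with hWdef
  have key1 : Aᵀ * Y = H * W := by
    rw [hWdef, hUdef, Matrix.transpose_mul, hinvT, ← Matrix.mul_assoc,
      ← Matrix.mul_assoc, hinv1, Matrix.one_mul]
  set D := 1 - symPart W with hDdef
  have hDsymT : (symPart W)ᵀ = symPart W := by
    rw [symPart, Matrix.transpose_smul, Matrix.transpose_add, Matrix.transpose_transpose,
      add_comm]
  have hD : D.PosSemidef := by
    refine Matrix.PosSemidef.of_dotProduct_mulVec_nonneg ?_ ?_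
    · show Dᴴ = D
      rw [Matrix.conjTranspose_eq_transpose_of_trivial, hDdef, Matrix.transpose_sub,
        Matrix.transpose_one, hDsymT]
    · intro x
      have hWx : x ⬝ᵥ (W *ᵥ x) = (U *ᵥ x) ⬝ᵥ (Y *ᵥ x) := by
        rw [hWdef, ← Matrix.mulVec_mulVec, ← dot_mulVec_transpose]
      have hsx : x ⬝ᵥ (symPart W *ᵥ x) = x ⬝ᵥ (W *ᵥ x) := by
        rw [symPart, Matrix.smul_mulVec, Matrix.add_mulVec, dotProduct_smul,
          dotProduct_add]
        have : x ⬝ᵥ (Wᵀ *ᵥ x) = x ⬝ᵥ (W *ᵥ x) := by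
          rw [← dot_mulVec_transpose, dotProduct_comm]
        rw [this, smul_eq_mul]; ring
      have hu : (U *ᵥ x) ⬝ᵥ (U *ᵥ x) = x ⬝ᵥ x := by
        rw [dot_mulVec_transpose, Matrix.mulVec_mulVec, hU, Matrix.one_mulVec]
      have hy : (Y *ᵥ x) ⬝ᵥ (Y *ᵥ x) = x ⬝ᵥ x := by
        rw [dot_mulVec_transpose, Matrix.mulVec_mulVec, hY, Matrix.one_mulVec]
      have hcs : ((U *ᵥ x) ⬝ᵥ (Y *ᵥ x))^2 ≤ (x ⬝ᵥ x)^2 := by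
        have := Finset.sum_mul_sq_le_sq_mul_sq Finset.univ (U *ᵥ x) (Y *ᵥ x)
        calc ((U *ᵥ x) ⬝ᵥ (Y *ᵥ x))^2 ≤ (∑ i, (U *ᵥ x) i ^2) * (∑ i, (Y *ᵥ x) i ^2) := this
          _ = ((U *ᵥ x) ⬝ᵥ (U *ᵥ x)) * ((Y *ᵥ x) ⬝ᵥ (Y *ᵥ x)) := by
              simp [dotProduct, sq]
          _ = (x ⬝ᵥ x)^2 := by rw [hu, hy, sq]
      have hxx : 0 ≤ x ⬝ᵥ x := dot_self_nonneg x
      have hle : (U *ᵥ x) ⬝ᵥ (Y *ᵥ x) ≤ x ⬝ᵥ x := by nlinarith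
      have : star x ⬝ᵥ (D *ᵥ x) = x ⬝ᵥ x - (U *ᵥ x) ⬝ᵥ (Y *ᵥ x) := by
        rw [show star x = x from rfl, hDdef, Matrix.sub_mulVec, dotProduct_sub,
          Matrix.one_mulVec, hsx, hWx]
      rw [this]; linarith
  have htr : (H * D).trace = H.trace - (Aᵀ * Y).trace := by
    have h1 : (H * Wᵀ).trace = (H * W).trace := by
      rw [← Matrix.trace_transpose (H * Wᵀ), Matrix.transpose_mul,
        Matrix.transpose_transpose, hHs, Matrix.trace_mul_comm]
    have h2 : (H * symPart W).trace = (H * W).trace := by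
      rw [symPart, Matrix.mul_smul, Matrix.trace_smul, Matrix.mul_add, Matrix.trace_add, h1]
      simp; ring
    rw [hDdef, Matrix.mul_sub, Matrix.mul_one, Matrix.trace_sub, h2, key1]
  constructor
  · have := trace_psd_mul_nonneg hHpsd hD
    rw [htr] at this; linarith
  · intro heq
    have h0 : (H * D).trace = 0 := by rw [htr, heq]; ring
    have hD0 : D = 0 := psd_eq_zero_of_trace hHpsd hdet hD h0
    have hsym1 : symPart W = 1 := by
      have h1 : 1 - symPart W = 0 := hD0
      rwa [sub_eq_zero, eq_comm] at h1
    have htrW : W.trace = (1 : Matrix (Fin k) (Fin k) ℝ).trace := by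
      have h3 : (symPart W).trace = W.trace := by
        rw [symPart, Matrix.trace_smul, Matrix.trace_add, Matrix.trace_transpose]
        simp; ring
      rw [← h3, hsym1]
    have hfz : fip (U - Y) (U - Y) = 0 := by
      rw [fip_sub_expand, show fip U U = (Uᵀ * U).trace from rfl, hU, ← hWdef, htrW, hY]
      ring
    have h2 : U - Y = 0 := eq_zero_of_fip_self _ hfz
    exact (sub_eq_zero.mp h2).symm

lemma sel_transpose_mul_self (D : Finset (Fin p)) : (sel D)ᵀ * sel D = 1 := by
  ext t t'
  simp only [Matrix.mul_apply, Matrix.transpose_apply, sel, Matrix.of_apply,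
    Matrix.one_apply, ite_mul, one_mul, zero_mul]
  rw [Finset.sum_ite_eq' (Finset.univ) ((D.orderEmbOfFin rfl) t) _]
  simp [EmbeddingLike.apply_eq_iff_eq, eq_comm]

lemma mulVec_dot_le {k : ℕ} (M : Mat n k) (x : Fin k → ℝ) :
    (M *ᵥ x) ⬝ᵥ (M *ᵥ x) ≤ fip M M * (x ⬝ᵥ x) := by
  have h1 : ∀ i : Fin n, ((M *ᵥ x) i)^2 ≤ (∑ j, (M i j)^2) * (∑ j, (x j)^2) := by
    intro i
    have := Finset.sum_mul_sq_le_sq_mul_sq Finset.univ (fun j => M i j) x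
    simpa [Matrix.mulVec, dotProduct] using this
  have h2 : (M *ᵥ x) ⬝ᵥ (M *ᵥ x) = ∑ i, ((M *ᵥ x) i)^2 := by
    simp [dotProduct, sq]
  have h3 : fip M M * (x ⬝ᵥ x) = ∑ i, (∑ j, (M i j)^2) * (∑ j, (x j)^2) := by
    rw [fip_eq_sum, ← Finset.sum_mul, Finset.sum_comm]
    congr 1
    simp [dotProduct, sq]
  rw [h2, h3]
  exact Finset.sum_le_sum fun i _ => h1 i

lemma dot_self_pos {a : ℕ} {v : Fin a → ℝ} (h : v ≠ 0) : 0 < v ⬝ᵥ v :=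
  lt_of_le_of_ne (dot_self_nonneg v)
    (Ne.symm ((dotProduct_self_eq_zero (v := v)).ne.2 h))

/-- Lemma 3.2: proximal smoothness of and projection onto the
submanifold block. -/
theorem projection_onto_submanifold_block
    (n p : ℕ) (hp : 1 ≤ p) (hpn : p ≤ n)
    (X : Mat n p) (hX : X ∈ Stiefel n p)
    (C : Finset (Fin p)) (hC : C.Nonempty)
    (M : Set (Matrix (Fin n) (Fin C.card) ℝ))
    (hM : M = {Y | Yᵀ * Y = 1 ∧ (X * sel Cᶜ)ᵀ * Y = 0})
    (Ξ : Matrix (Fin n) (Fin C.card) ℝ)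
    (hdist : ∃ Y ∈ M, fnorm (Ξ - Y) < 1) :
    (Ξᵀ * ((1 - (X * sel Cᶜ) * (X * sel Cᶜ)ᵀ) * Ξ)).PosDef ∧
    {Y | Y ∈ M ∧ ∀ Z ∈ M, fnorm (Ξ - Y) ≤ fnorm (Ξ - Z)}
      = {(1 - (X * sel Cᶜ) * (X * sel Cᶜ)ᵀ) * Ξ
          * invSqrt (Ξᵀ * ((1 - (X * sel Cᶜ) * (X * sel Cᶜ)ᵀ) * Ξ))} ∧
    {Y | Y ∈ Stiefel n C.card ∧ ∀ Z ∈ Stiefel n C.card,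
        fnorm ((1 - (X * sel Cᶜ) * (X * sel Cᶜ)ᵀ) * Ξ - Y)
          ≤ fnorm ((1 - (X * sel Cᶜ) * (X * sel Cᶜ)ᵀ) * Ξ - Z)}
      = {(1 - (X * sel Cᶜ) * (X * sel Cᶜ)ᵀ) * Ξ
          * invSqrt (Ξᵀ * ((1 - (X * sel Cᶜ) * (X * sel Cᶜ)ᵀ) * Ξ))} ∧
    ((X * sel Cᶜ)ᵀ * Ξ = 0 →
      (1 - (X * sel Cᶜ) * (X * sel Cᶜ)ᵀ) * Ξ
          * invSqrt (Ξᵀ * ((1 - (X * sel Cᶜ) * (X * sel Cᶜ)ᵀ) * Ξ))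
        = Ξ * invSqrt (Ξᵀ * Ξ) ∧
      {Y | Y ∈ Stiefel n C.card ∧ ∀ Z ∈ Stiefel n C.card,
          fnorm (Ξ - Y) ≤ fnorm (Ξ - Z)} = {Ξ * invSqrt (Ξᵀ * Ξ)}) := by
  classical
  set N := X * sel Cᶜ with hNdef
  set P : Matrix (Fin n) (Fin n) ℝ := 1 - N * Nᵀ with hPdef
  set B := P * Ξ with hBdef
  have hXX : Xᵀ * X = 1 := hX
  -- basic facts
  have hN : Nᵀ * N = 1 := by
    rw [hNdef, Matrix.transpose_mul, Matrix.mul_assoc, ← Matrix.mul_assoc Xᵀ X, hXX,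
      Matrix.one_mul, sel_transpose_mul_self]
  have hPsym : Pᵀ = P := by
    rw [hPdef, Matrix.transpose_sub, Matrix.transpose_one, Matrix.transpose_mul,
      Matrix.transpose_transpose]
  have hPP : P * P = P := by
    have e0 : N * Nᵀ * (N * Nᵀ) = N * Nᵀ := by
      rw [Matrix.mul_assoc, ← Matrix.mul_assoc Nᵀ N Nᵀ, hN, Matrix.one_mul]
    rw [hPdef, Matrix.sub_mul, Matrix.one_mul, Matrix.mul_sub, Matrix.mul_one, e0, sub_self,
      sub_zero]
  have hNP : Nᵀ * P = 0 := by
    rw [hPdef, Matrix.mul_sub, Matrix.mul_one, ← Matrix.mul_assoc, hN, Matrix.one_mul,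
      sub_self]
  have hSBB : Ξᵀ * (P * Ξ) = Bᵀ * B := by
    rw [hBdef, Matrix.transpose_mul, hPsym, Matrix.mul_assoc, ← Matrix.mul_assoc P P Ξ, hPP]
  rw [hSBB]
  -- the PSD fact
  have hpsd : (Bᵀ * B).PosSemidef := by
    rw [← Matrix.conjTranspose_eq_transpose_of_trivial]
    exact Matrix.posSemidef_conjTranspose_mul_self B
  obtain ⟨Y0, hY0M, hY0dist⟩ := hdist
  have hY0 : Y0ᵀ * Y0 = 1 ∧ Nᵀ * Y0 = 0 := by rwa [hM] at hY0M
  -- positive definiteness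
  have hBpd : (Bᵀ * B).PosDef := by
    refine Matrix.PosDef.of_dotProduct_mulVec_pos hpsd.1 (fun x hx => ?_)
    have hq : star x ⬝ᵥ ((Bᵀ * B) *ᵥ x) = (B *ᵥ x) ⬝ᵥ (B *ᵥ x) := by
      rw [show star x = x from rfl, ← Matrix.mulVec_mulVec, ← dot_mulVec_transpose]
    rw [hq]
    rcases eq_or_ne (B *ᵥ x) 0 with hB0 | hB0
    · exfalso
      have hxx : 0 < x ⬝ᵥ x := dot_self_pos hx
      set xi := Ξ *ᵥ x with hxidef
      have hPxi : xi - (N * Nᵀ) *ᵥ xi = 0 := by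
        have h1 : P *ᵥ xi = 0 := by
          rw [hxidef, Matrix.mulVec_mulVec, ← hBdef]; exact hB0
        rw [← h1, hPdef, Matrix.sub_mulVec, Matrix.one_mulVec]
      have hxi : xi = N *ᵥ (Nᵀ *ᵥ xi) := by
        have := sub_eq_zero.mp hPxi
        rwa [← Matrix.mulVec_mulVec] at this
      have hxiy : xi ⬝ᵥ (Y0 *ᵥ x) = 0 := by
        rw [hxi, dot_mulVec_transpose, Matrix.mulVec_mulVec, Matrix.mulVec_mulVec,
          hY0.2, Matrix.zero_mulVec, dotProduct_zero]
      have hyy : (Y0 *ᵥ x) ⬝ᵥ (Y0 *ᵥ x) = x ⬝ᵥ x := by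
        rw [dot_mulVec_transpose, Matrix.mulVec_mulVec, hY0.1, Matrix.one_mulVec]
      have hdd : ((Ξ - Y0) *ᵥ x) ⬝ᵥ ((Ξ - Y0) *ᵥ x) ≤ fip (Ξ - Y0) (Ξ - Y0) * (x ⬝ᵥ x) :=
        mulVec_dot_le _ x
      have hexp : ((Ξ - Y0) *ᵥ x) ⬝ᵥ ((Ξ - Y0) *ᵥ x)
          = xi ⬝ᵥ xi + x ⬝ᵥ x - 2 * (xi ⬝ᵥ (Y0 *ᵥ x)) := by
        rw [Matrix.sub_mulVec, dotProduct_sub, sub_dotProduct,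
          sub_dotProduct, hyy, ← hxidef,
          dotProduct_comm (Y0 *ᵥ x) xi]
        ring
      have hfip1 : fip (Ξ - Y0) (Ξ - Y0) < 1 := by
        have h1 : fnorm (Ξ - Y0) ^ 2 < 1 := by
          have h2 : 0 ≤ fnorm (Ξ - Y0) := Real.sqrt_nonneg _
          nlinarith
        rwa [fnorm_sq] at h1
      have hxixi : 0 ≤ xi ⬝ᵥ xi := dot_self_nonneg xi
      nlinarith
    · exact dot_self_pos hB0
  -- polar data
  set H := (psqrt hBpd.posSemidef) with hHdef
  obtain ⟨hUst, hUtr, hbound⟩ := polar_key B hBpd H hHdef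
  have hinvS : invSqrt (Bᵀ * B) = H⁻¹ := by
    rw [invSqrt, dif_pos hBpd.posSemidef]; rfl
  rw [hinvS]
  set U := B * H⁻¹ with hUdef
  -- candidate is in M
  have hNB : Nᵀ * B = 0 := by
    rw [hBdef, ← Matrix.mul_assoc, hNP, Matrix.zero_mul]
  have hUM : U ∈ M := by
    rw [hM]
    refine ⟨hUst, ?_⟩
    rw [hUdef, ← Matrix.mul_assoc, hNB, Matrix.zero_mul]
  -- trace conversion on M
  have htrM : ∀ Y : Matrix (Fin n) (Fin C.card) ℝ, Nᵀ * Y = 0 → Bᵀ * Y = Ξᵀ * Y := by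
    intro Y hYn
    have hPY : P * Y = Y := by
      rw [hPdef, Matrix.sub_mul, Matrix.one_mul, Matrix.mul_assoc, hYn, Matrix.mul_zero,
        sub_zero]
    rw [hBdef, Matrix.transpose_mul, hPsym, Matrix.mul_assoc, hPY]
  -- Part 2 : nearest points on M
  have part2 : {Y | Y ∈ M ∧ ∀ Z ∈ M, fnorm (Ξ - Y) ≤ fnorm (Ξ - Z)} = {U} := by
    ext Y
    simp only [Set.mem_setOf_eq, Set.mem_singleton_iff]
    constructor
    · rintro ⟨hYM, hYmin⟩
      obtain ⟨hYs, hYn⟩ : Yᵀ * Y = 1 ∧ Nᵀ * Y = 0 := by rwa [hM] at hYM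
      have hUs : Uᵀ * U = 1 := hUst
      have hUn : Nᵀ * U = 0 := by rw [hUdef, ← Matrix.mul_assoc, hNB, Matrix.zero_mul]
      have h1 := (fnorm_sub_le_iff (A := Ξ) hYs hUs).mp (hYmin U hUM)
      rw [← htrM Y hYn, ← htrM U hUn, hUtr] at h1
      have h2 := (hbound Y hYs).1
      exact (hbound Y hYs).2 (le_antisymm h2 h1)
    · intro hYU
      subst hYU
      refine ⟨hUM, fun Z hZM => ?_⟩
      obtain ⟨hZs, hZn⟩ : Zᵀ * Z = 1 ∧ Nᵀ * Z = 0 := by rwa [hM] at hZM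
      refine (fnorm_sub_le_iff (A := Ξ) hUst hZs).mpr ?_
      rw [← htrM Z hZn, ← htrM U (by rw [hUdef, ← Matrix.mul_assoc, hNB, Matrix.zero_mul]),
        hUtr]
      exact (hbound Z hZs).1
  -- Part 3 : nearest points on the Stiefel manifold
  have part3 : {Y | Y ∈ Stiefel n C.card ∧ ∀ Z ∈ Stiefel n C.card,
      fnorm (B - Y) ≤ fnorm (B - Z)} = {U} := by
    ext Y
    simp only [Set.mem_setOf_eq, Set.mem_singleton_iff]
    constructor
    · rintro ⟨hYs, hYmin⟩
      have hYs' : Yᵀ * Y = 1 := hYs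
      have h1 := (fnorm_sub_le_iff (A := B) hYs' hUst).mp (hYmin U hUst)
      rw [hUtr] at h1
      exact (hbound Y hYs').2 (le_antisymm (hbound Y hYs').1 h1)
    · intro hYU
      subst hYU
      refine ⟨hUst, fun Z hZs => ?_⟩
      refine (fnorm_sub_le_iff (A := B) hUst hZs).mpr ?_
      rw [hUtr]
      exact (hbound Z hZs).1
  refine ⟨hBpd, part2, part3, fun h0 => ?_⟩
  -- Part 4
  have hBX : B = Ξ := by
    rw [hBdef, hPdef, Matrix.sub_mul, Matrix.one_mul, Matrix.mul_assoc, h0,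
      Matrix.mul_zero, sub_zero]
  have hSX : Bᵀ * B = Ξᵀ * Ξ := by rw [hBX]
  have hinv2 : invSqrt (Ξᵀ * Ξ) = H⁻¹ := by rw [← hSX, hinvS]
  constructor
  · rw [hinv2, hUdef, hBX]
  · rw [hinv2]
    rw [← hBX]
    exact part3

end RSSM
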